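/- Let T > 0, a > 0, let k⁰⁰, k¹¹, k²² > 0 be kernel constants, let σ : [0,T] → ℝ be right-continuous with left limits, with at most finitely many discontinuity points and σ̲ ≤ σ(u) ≤ σ̄ for constants 0 < σ̲ ≤ σ̄, let α : [0,T] → ℝ be continuous positive, and let the price jump times 0 < τ_1 < … < τ_N ≤ T have sizes j_1, …, j_N ∈ ℝ∖{0}. For each integer B ≥ 1, with Δ_B = T/B and 𝖳_i = i·T/B, set σ̄_i² = Δ_B^{−1}·( ∫_{𝖳_{i−1}}^{𝖳_i} σ(u)² du + Σ_{τ_p ∈ (𝖳_{i−1},𝖳_i]} j_p² ), 𝒬_i = ∫_{𝖳_{i−1}}^{𝖳_i} σ(u)⁴ du + Σ_{τ_p ∈ (𝖳_{i−1},𝖳_i]} j_p²·(σ(τ_p)² + σ(τ_p⁻)²), ρ̃_i = Δ_B·σ̄_i²/(Δ_B·𝒬_i)^{1/2} and R_i = (∫₀^T α^{−1})/(∫_{𝖳_{i−1}}^{𝖳_i} α^{−1}). Then, as B → ∞, Σ_{i=1}^B R_i^{1/2}·a·(Δ_B·𝒬_i)^{3/4}·g(ρ̃_i) converges to g(1)·a·(∫₀^T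 α(s)^{−1} ds)^{1/2}·∫₀^T α(s)^{1/2}·σ(s)³ ds + (16/3)·(2^{−1/2} + 2^{1/2})·(k⁰⁰·k¹¹)^{1/2}·a·(∫₀^T α(s)^{−1} ds)^{1/2} · Σ_{p=1}^N j_p²·( σ(τ_p)²·α(τ_p) + σ(τ_p⁻)²·α(τ_p) )^{1/2}, where σ(τ⁻) denotes the left limit of σ at τ. -/

import Mathlib

open MeasureTheory Filter
open scoped Classical

/-- `p(ρ) = (1 + (1 + 3d/ρ²)^{1/2})^{1/2}` with `d = k⁰⁰k²²/(k¹¹)²`. -/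
noncomputable def pKer (k00 k11 k22 ρ : ℝ) : ℝ :=
  (1 + (1 + 3 * (k00 * k22 / k11 ^ 2) / ρ ^ 2) ^ ((1 : ℝ) / 2)) ^ ((1 : ℝ) / 2)

/-- `g(ρ) = (16/3)(ρ k⁰⁰ k¹¹)^{1/2}(1/p(ρ) + p(ρ))`. -/
noncomputable def gKer (k00 k11 k22 ρ : ℝ) : ℝ :=
  (16 / 3) * (ρ * k00 * k11) ^ ((1 : ℝ) / 2) *
    (1 / pKer k00 k11 k22 ρ + pKer k00 k11 k22 ρ)

/-- Jump-modified quarticity on block `i` (for `B` blocks):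
`𝒬_i = ∫_block σ⁴ + Σ_{τ_p ∈ block} j_p²(σ(τ_p)² + σ(τ_p⁻)²)`,
where `σm` is the left-limit function of `σ`. -/
noncomputable def Qjump (T : ℝ) (σ σm : ℝ → ℝ) {N : ℕ} (τ j : Fin N → ℝ)
    (B i : ℕ) : ℝ :=
  (∫ u in ((i : ℝ) * T / B)..(((i : ℝ) + 1) * T / B), σ u ^ 4) +
    ∑ p : Fin N,
      if (i : ℝ) * T / B < τ p ∧ τ p ≤ ((i : ℝ) + 1) * T / B then
        j p ^ 2 * (σ (τ p) ^ 2 + σm (τ p) ^ 2) else 0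

/-- Quadratic variation on block `i`:
`Δ_B σ̄_i² = ∫_block σ² + Σ_{τ_p ∈ block} j_p²`. -/
noncomputable def QVjump (T : ℝ) (σ : ℝ → ℝ) {N : ℕ} (τ j : Fin N → ℝ)
    (B i : ℕ) : ℝ :=
  (∫ u in ((i : ℝ) * T / B)..(((i : ℝ) + 1) * T / B), σ u ^ 2) +
    ∑ p : Fin N,
      if (i : ℝ) * T / B < τ p ∧ τ p ≤ ((i : ℝ) + 1) * T / B then j p ^ 2 else 0

noncomputable def blkI (T : ℝ) (B : ℕ) (x : ℝ) : ℤ := ⌈x * B / T⌉ - 1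

lemma blkI_eq_iff {T : ℝ} (hT : 0 < T) {B : ℕ} (hB : 1 ≤ B) {x : ℝ} (i : ℤ) :
    blkI T B x = i ↔ ((i : ℝ) * T / B < x ∧ x ≤ ((i : ℝ) + 1) * T / B) := by
  have hB0 : (0:ℝ) < B := by exact_mod_cast hB
  have h1 : blkI T B x = i ↔ ⌈x * B / T⌉ = i + 1 := by unfold blkI; omega
  rw [h1, Int.ceil_eq_iff]
  have e1 : ((i:ℝ) * T / B < x) ↔ ((i:ℝ) < x * B / T) := by
    rw [div_lt_iff₀ hB0, lt_div_iff₀ hT]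
  have e2 : (x ≤ ((i:ℝ) + 1) * T / B) ↔ (x * B / T ≤ (i:ℝ) + 1) := by
    rw [le_div_iff₀ hB0, div_le_iff₀ hT]
  push_cast
  constructor
  · rintro ⟨h1, h2⟩; exact ⟨e1.2 (by linarith), e2.2 h2⟩
  · rintro ⟨h1, h2⟩; exact ⟨by have := e1.1 h1; linarith, e2.1 h2⟩

lemma blkI_mem {T : ℝ} (hT : 0 < T) {B : ℕ} (hB : 1 ≤ B) {x : ℝ} (hx : 0 < x) (hxT : x ≤ T) :
    0 ≤ blkI T B x ∧ blkI T B x < (B:ℤ) ∧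
      (blkI T B x : ℝ) * T / B < x ∧ x ≤ ((blkI T B x : ℝ) + 1) * T / B := by
  have hB0 : (0:ℝ) < B := by exact_mod_cast hB
  have hycpos : (1:ℤ) ≤ ⌈x * B / T⌉ := by
    have : (0:ℝ) < x * B / T := by positivity
    exact Int.ceil_pos.2 this
  have hyle : ⌈x * B / T⌉ ≤ (B:ℤ) := by
    apply Int.ceil_le.2
    push_cast
    rw [div_le_iff₀ hT]
    nlinarith
  have hmem := (blkI_eq_iff hT hB (blkI T B x)).1 rfl
  refine ⟨by unfold blkI; omega, by unfold blkI; omega, hmem.1, hmem.2⟩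

section helpers

lemma integral_eq_of_eqOn_Ioc {f : ℝ → ℝ} {c l r : ℝ} (hlr : l ≤ r)
    (h : ∀ x ∈ Set.Ioc l r, f x = c) : ∫ x in l..r, f x = c * (r - l) := by
  rw [intervalIntegral.integral_of_le hlr,
    MeasureTheory.setIntegral_congr_fun measurableSet_Ioc h, setIntegral_const,
    measureReal_def, Real.volume_Ioc, smul_eq_mul, ENNReal.toReal_ofReal (by linarith), mul_comm]

lemma intervalIntegrable_of_eqOn_Ioc {f : ℝ → ℝ} {c l r : ℝ} (hlr : l ≤ r)
    (h : ∀ x ∈ Set.Ioc l r, f x = c) : IntervalIntegrable f volume l r := by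
  rw [intervalIntegrable_iff_integrableOn_Ioc_of_le hlr]
  exact (integrableOn_const measure_Ioc_lt_top.ne).congr_fun
    (fun x hx => (h x hx).symm) measurableSet_Ioc

lemma integral_le_of_le {f : ℝ → ℝ} {M l r : ℝ} (hlr : l ≤ r)
    (hint : IntervalIntegrable f volume l r) (h : ∀ x ∈ Set.Icc l r, f x ≤ M) :
    ∫ x in l..r, f x ≤ M * (r - l) := by
  have := intervalIntegral.integral_mono_on hlr hint intervalIntegrable_const h
  simpa [mul_comm] using this

lemma le_integral_of_le {f : ℝ → ℝ} {m l r : ℝ} (hlr : l ≤ r)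
    (hint : IntervalIntegrable f volume l r) (h : ∀ x ∈ Set.Icc l r, m ≤ f x) :
    m * (r - l) ≤ ∫ x in l..r, f x := by
  have := intervalIntegral.integral_mono_on hlr intervalIntegrable_const hint h
  simpa [mul_comm] using this

/-- a right-continuous bounded function on `[0,T)` is integrable on subintervals. -/
lemma integrable_pow_of_rc {T σlo σhi : ℝ} {σ : ℝ → ℝ} (hT : 0 < T)
    (hrc : ∀ u ∈ Set.Ico (0:ℝ) T, ContinuousWithinAt σ (Set.Ici u) u)
    (hbd : ∀ u ∈ Set.Icc (0:ℝ) T, σlo ≤ σ u ∧ σ u ≤ σhi) (n : ℕ)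
    {l r : ℝ} (h0 : 0 ≤ l) (hrT : r ≤ T) (hlr : l ≤ r) :
    IntervalIntegrable (fun u => σ u ^ n) volume l r := by
  -- measurable approximants
  set g : ℝ → ℝ := (Set.Ico (0:ℝ) T).indicator σ with hg
  have hgmeas : Measurable g := by
    have happrox : ∀ k : ℕ, Measurable ((Set.Ico (0:ℝ) T).indicator
        (fun x => σ ((⌈x * (k+1)⌉ : ℝ) / (k+1)))) := by
      intro k
      apply Measurable.indicator _ measurableSet_Ico
      have h1 : Measurable fun x : ℝ => (⌈x * (k+1)⌉ : ℤ) :=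
        (measurable_id.mul_const _).ceil
      exact (measurable_of_countable (fun z : ℤ => σ ((z : ℝ) / (k+1)))).comp h1
    apply measurable_of_tendsto_metrizable happrox
    rw [tendsto_pi_nhds]
    intro x
    by_cases hx : x ∈ Set.Ico (0:ℝ) T
    · simp only [hg, Set.indicator_of_mem hx]
      have htend : Tendsto (fun k : ℕ => (⌈x * (k+1)⌉ : ℝ) / (k+1)) atTop
          (nhdsWithin x (Set.Ici x)) := by
        apply tendsto_nhdsWithin_of_tendsto_nhds_of_eventually_within
        · have hle : ∀ k : ℕ, x ≤ (⌈x * (k+1)⌉ : ℝ) / (k+1) := by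
            intro k
            rw [le_div_iff₀ (by positivity)]
            exact Int.le_ceil _
          have hle2 : ∀ k : ℕ, (⌈x * (k+1)⌉ : ℝ) / (k+1) ≤ x + 1/(k+1) := by
            intro k
            rw [div_le_iff₀ (by positivity)]
            have := Int.ceil_lt_add_one (x * (k+1))
            calc ((⌈x * (k+1)⌉ : ℝ)) ≤ x * (k+1) + 1 := by linarith
              _ = (x + 1/(k+1)) * (k+1) := by field_simp
          have h1 : Tendsto (fun k : ℕ => x + 1/((k:ℝ)+1)) atTop (nhds (x + 0)) := by
            exact tendsto_const_nhds.add (tendsto_one_div_add_atTop_nhds_zero_nat)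
        
          rw [add_zero] at h1
          exact tendsto_of_tendsto_of_tendsto_of_le_of_le tendsto_const_nhds h1 hle hle2
        · exact Filter.Eventually.of_forall fun k => by
            have : x ≤ (⌈x * (k+1)⌉ : ℝ) / (k+1) := by
              rw [le_div_iff₀ (by positivity)]
              exact Int.le_ceil _
            exact this
      exact ((hrc x hx).tendsto.comp htend :)
    · simp only [hg, Set.indicator_of_notMem hx]
      exact tendsto_const_nhds
  -- σ^n agrees a.e. with g^n on Ioc l r
  have haemeas : AEStronglyMeasurable (fun u => σ u ^ n) (volume.restrict (Set.Ioc l r)) := by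
    refine (hgmeas.pow_const n).aestronglyMeasurable.congr ?_
    have hnull : volume.restrict (Set.Ioc l r) {x | ¬ (g x ^ n = σ x ^ n)} = 0 := by
      have hsub : {x | ¬ (g x ^ n = σ x ^ n)} ∩ Set.Ioc l r ⊆ {T} := by
        intro x ⟨hx1, hx2⟩
        by_contra hxT
        have hxIco : x ∈ Set.Ico (0:ℝ) T := by
          constructor
          · linarith [hx2.1]
          · rcases lt_or_eq_of_le (le_trans hx2.2 hrT) with h | h
            · exact h
            · exact absurd h hxT
        exact hx1 (by rw [hg, Set.indicator_of_mem hxIco])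
      rw [Measure.restrict_apply₀' (measurableSet_Ioc.nullMeasurableSet)]
      exact measure_mono_null hsub (measure_singleton T)
    rw [Filter.EventuallyEq, ae_iff]
    exact hnull
  rw [intervalIntegrable_iff_integrableOn_Ioc_of_le hlr]
  refine Integrable.mono' (integrable_const ((max |σlo| |σhi|) ^ n)) haemeas ?_
  rw [ae_restrict_iff' measurableSet_Ioc]
  refine Filter.Eventually.of_forall fun x hx => ?_
  have hxmem : x ∈ Set.Icc (0:ℝ) T := ⟨by linarith [hx.1], le_trans hx.2 hrT⟩
  have := hbd x hxmem
  have h1 : |σ x| ≤ max |σlo| |σhi| := abs_le_max_abs_abs this.1 this.2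
  calc ‖σ x ^ n‖ = |σ x| ^ n := by rw [Real.norm_eq_abs, abs_pow]
    _ ≤ (max |σlo| |σhi|) ^ n := pow_le_pow_left₀ (abs_nonneg _) h1 n

end helpers

lemma block_in_Icc {T : ℝ} (hT : 0 < T) {B : ℕ} (hB : 1 ≤ B) {x : ℝ} (hx : 0 < x) (hxT : x ≤ T) :
    0 ≤ (blkI T B x : ℝ) * T / B ∧ ((blkI T B x : ℝ) + 1) * T / B ≤ T ∧
      (blkI T B x : ℝ) * T / B ≤ ((blkI T B x : ℝ) + 1) * T / B := by
  obtain ⟨h0, hlt, _, _⟩ := blkI_mem hT hB hx hxT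
  have hB0 : (0:ℝ) < B := by exact_mod_cast hB
  have h0' : (0:ℝ) ≤ (blkI T B x : ℝ) := by exact_mod_cast h0
  have hlt' : (blkI T B x : ℝ) + 1 ≤ B := by
    have : blkI T B x + 1 ≤ (B:ℤ) := hlt
    exact_mod_cast this
  refine ⟨by positivity, ?_, ?_⟩
  · rw [div_le_iff₀ hB0]; nlinarith
  · apply div_le_div_of_nonneg_right (by nlinarith) hB0.le

/-- block averages converge to the value at a continuity point. -/
lemma avg_tendsto {T : ℝ} (hT : 0 < T) {f : ℝ → ℝ} {x L : ℝ} (hx : 0 < x) (hxT : x ≤ T)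
    (hint : ∀ l r : ℝ, 0 ≤ l → r ≤ T → l ≤ r → IntervalIntegrable f volume l r)
    (hcont : Tendsto f (nhdsWithin x (Set.Icc 0 T)) (nhds L)) :
    Tendsto (fun B : ℕ => (T / B)⁻¹ *
      ∫ u in ((blkI T B x : ℝ) * T / B)..(((blkI T B x : ℝ) + 1) * T / B), f u)
      atTop (nhds L) := by
  rw [Metric.tendsto_atTop]
  intro ε hε
  obtain ⟨δ, hδ, hδ'⟩ := (Metric.tendsto_nhdsWithin_nhds.1 hcont) (ε/2) (by linarith)
  obtain ⟨M, hM⟩ := exists_nat_gt (T / δ)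
  refine ⟨max 1 M + 1, fun B hB => ?_⟩
  have hB1 : 1 ≤ B := le_trans (le_trans (le_max_left 1 M) (Nat.le_succ _)) hB
  have hB0 : (0:ℝ) < B := by exact_mod_cast hB1
  have hTB : 0 < T / B := by positivity
  have hTBδ : T / B < δ := by
    have hMB : (M:ℝ) < B := by
      exact_mod_cast lt_of_lt_of_le (Nat.lt_succ_of_le (le_max_right 1 M)) hB
    have h2 := (div_lt_iff₀ hδ).1 hM
    rw [div_lt_iff₀ hB0]
    nlinarith
  set l : ℝ := (blkI T B x : ℝ) * T / B with hl
  set r : ℝ := ((blkI T B x : ℝ) + 1) * T / B with hr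
  obtain ⟨hl0, hrT, hlr⟩ := block_in_Icc hT hB1 hx hxT
  obtain ⟨_, _, hlx, hxr⟩ := blkI_mem hT hB1 hx hxT
  have hrl : r - l = T / B := by rw [hl, hr]; field_simp; ring
  -- pointwise bound on the block
  have hbd : ∀ u ∈ Set.uIoc l r, ‖f u - L‖ ≤ ε/2 := by
    intro u hu
    rw [Set.uIoc_of_le hlr] at hu
    have huI : u ∈ Set.Icc (0:ℝ) T := ⟨by linarith [hu.1], le_trans hu.2 hrT⟩
    have hd : dist u x < δ := by
      rw [Real.dist_eq, abs_lt]
      constructor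
      · have : x ≤ r := hxr
        have : u > l := hu.1
        have : x - u < r - l := by linarith [hu.1, hxr]
        linarith [hrl ▸ this, hTBδ]
      · have : u - x < r - l := by linarith [hu.2, hlx]
        linarith [hrl ▸ this, hTBδ]
    exact le_of_lt (hδ' huI hd)
  have hfint : IntervalIntegrable f volume l r := hint l r hl0 hrT hlr
  have hkey : ‖(∫ u in l..r, f u) - (r - l) * L‖ ≤ ε/2 * |r - l| := by
    have : (∫ u in l..r, f u) - (r - l) * L = ∫ u in l..r, (f u - L) := by
      rw [intervalIntegral.integral_sub hfint intervalIntegrable_const,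
        intervalIntegral.integral_const, smul_eq_mul]
    rw [this]
    exact intervalIntegral.norm_integral_le_of_norm_le_const hbd
  rw [Real.dist_eq]
  have habs : |r - l| = T / B := by rw [hrl]; exact abs_of_pos hTB
  have : (T / B)⁻¹ * (∫ u in l..r, f u) - L
      = (T / B)⁻¹ * ((∫ u in l..r, f u) - (r - l) * L) := by
    rw [mul_sub, hrl]
    field_simp
  rw [this, abs_mul, abs_inv, abs_of_pos hTB]
  calc (T/B)⁻¹ * |(∫ u in l..r, f u) - (r - l) * L| ≤ (T/B)⁻¹ * (ε/2 * (T/B)) := by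
        apply mul_le_mul_of_nonneg_left _ (le_of_lt (inv_pos.2 hTB))
        rw [← habs]; exact_mod_cast hkey
    _ = ε/2 := by field_simp
    _ < ε := by linarith

noncomputable def hKer (k00 k11 k22 ρ : ℝ) : ℝ :=
  1 / pKer k00 k11 k22 ρ + pKer k00 k11 k22 ρ

lemma gKer_eq (k00 k11 k22 ρ : ℝ) :
    gKer k00 k11 k22 ρ = 16 / 3 * (ρ * k00 * k11) ^ ((1:ℝ)/2) * hKer k00 k11 k22 ρ := rfl

section pker
variable {k00 k11 k22 : ℝ} (hd : 0 ≤ k00 * k22 / k11 ^ 2)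

include hd in
lemma inner_nonneg (ρ : ℝ) : 0 ≤ 3 * (k00 * k22 / k11 ^ 2) / ρ ^ 2 :=
  div_nonneg (by linarith) (sq_nonneg ρ)

include hd in
lemma one_le_pKer (ρ : ℝ) : 1 ≤ pKer k00 k11 k22 ρ := by
  have h1 : (1:ℝ) ≤ (1 + 3 * (k00 * k22 / k11 ^ 2) / ρ ^ 2) ^ ((1:ℝ)/2) :=
    Real.one_le_rpow (by linarith [inner_nonneg hd ρ]) (by norm_num)
  exact Real.one_le_rpow (by linarith) (by norm_num)

include hd in
lemma pKer_pos (ρ : ℝ) : 0 < pKer k00 k11 k22 ρ := lt_of_lt_of_le one_pos (one_le_pKer hd ρ)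

include hd in
lemma pKer_le_pKer {ρ1 ρ2 : ℝ} (h1 : 0 < ρ1) (h12 : ρ1 ≤ ρ2) :
    pKer k00 k11 k22 ρ2 ≤ pKer k00 k11 k22 ρ1 := by
  have hsq : ρ1 ^ 2 ≤ ρ2 ^ 2 := by nlinarith
  have h0 : 3 * (k00 * k22 / k11 ^ 2) / ρ2 ^ 2 ≤ 3 * (k00 * k22 / k11 ^ 2) / ρ1 ^ 2 :=
    div_le_div_of_nonneg_left (by linarith) (by positivity) hsq
  have h2 : (1 + 3 * (k00 * k22 / k11 ^ 2) / ρ2 ^ 2) ^ ((1:ℝ)/2)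
      ≤ (1 + 3 * (k00 * k22 / k11 ^ 2) / ρ1 ^ 2) ^ ((1:ℝ)/2) :=
    Real.rpow_le_rpow (by linarith [inner_nonneg hd ρ2]) (by linarith) (by norm_num)
  have h3 : (0:ℝ) ≤ (1 + 3 * (k00 * k22 / k11 ^ 2) / ρ2 ^ 2) ^ ((1:ℝ)/2) :=
    Real.rpow_nonneg (by linarith [inner_nonneg hd ρ2]) _
  exact Real.rpow_le_rpow (by linarith) (by linarith) (by norm_num)

include hd in
lemma hKer_nonneg (ρ : ℝ) : 0 ≤ hKer k00 k11 k22 ρ := by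
  have := pKer_pos hd (k22 := k22) ρ
  unfold hKer; positivity

include hd in
lemma hKer_le {ρmin ρ : ℝ} (h1 : 0 < ρmin) (h12 : ρmin ≤ ρ) :
    hKer k00 k11 k22 ρ ≤ 1 + pKer k00 k11 k22 ρmin := by
  have hp1 : 1 ≤ pKer k00 k11 k22 ρ := one_le_pKer hd ρ
  have h2 : 1 / pKer k00 k11 k22 ρ ≤ 1 := by
    rw [div_le_one (by linarith)]; exact hp1
  have := pKer_le_pKer hd h1 h12 (k22 := k22)
  unfold hKer; linarith

lemma pKer_continuousAt {ρ0 : ℝ} (hρ0 : ρ0 ≠ 0) :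
    ContinuousAt (pKer k00 k11 k22) ρ0 := by
  have h1 : ContinuousAt (fun ρ : ℝ => 1 + 3 * (k00 * k22 / k11 ^ 2) / ρ ^ 2) ρ0 := by
    apply continuousAt_const.add
    exact continuousAt_const.div (continuousAt_id.pow 2) (pow_ne_zero 2 hρ0)
  have h2 : ContinuousAt (fun ρ : ℝ => (1 + 3 * (k00 * k22 / k11 ^ 2) / ρ ^ 2) ^ ((1:ℝ)/2)) ρ0 :=
    (Real.continuousAt_rpow_const _ _ (Or.inr (by norm_num))).comp h1
  exact (Real.continuousAt_rpow_const _ _ (Or.inr (by norm_num))).comp (continuousAt_const.add h2)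

include hd in
lemma hKer_continuousAt {ρ0 : ℝ} (hρ0 : ρ0 ≠ 0) :
    ContinuousAt (hKer k00 k11 k22) ρ0 := by
  have hp := pKer_continuousAt (k00 := k00) (k11 := k11) (k22 := k22) hρ0
  have hne : pKer k00 k11 k22 ρ0 ≠ 0 := ne_of_gt (pKer_pos hd ρ0)
  exact (continuousAt_const.div hp hne).add hp

include hd in
lemma gKer_continuousAt {ρ0 : ℝ} (hρ0 : ρ0 ≠ 0) :
    ContinuousAt (gKer k00 k11 k22) ρ0 := by
  have h1 : ContinuousAt (fun ρ : ℝ => (ρ * k00 * k11) ^ ((1:ℝ)/2)) ρ0 :=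
    (Real.continuousAt_rpow_const _ _ (Or.inr (by norm_num))).comp
      ((continuousAt_id.mul continuousAt_const).mul continuousAt_const)
  exact (continuousAt_const.mul h1).mul (hKer_continuousAt hd hρ0)

lemma pKer_tendsto_atTop :
    Tendsto (pKer k00 k11 k22) atTop (nhds ((2:ℝ) ^ ((1:ℝ)/2))) := by
  have h0 : Tendsto (fun ρ : ℝ => 3 * (k00 * k22 / k11 ^ 2) / ρ ^ 2) atTop (nhds 0) := by
    apply Tendsto.div_atTop tendsto_const_nhds
    exact tendsto_pow_atTop (by norm_num) |>.comp tendsto_id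
  have h1 : Tendsto (fun ρ : ℝ => 1 + 3 * (k00 * k22 / k11 ^ 2) / ρ ^ 2) atTop (nhds 1) := by
    have := tendsto_const_nhds (x := (1:ℝ)) (f := atTop (α := ℝ)) |>.add h0
    simpa using this
  have h2 : Tendsto (fun ρ : ℝ => (1 + 3 * (k00 * k22 / k11 ^ 2) / ρ ^ 2) ^ ((1:ℝ)/2)) atTop
      (nhds 1) := by
    have := (Real.continuousAt_rpow_const 1 ((1:ℝ)/2) (Or.inr (by norm_num))).tendsto.comp h1
    simpa [Real.one_rpow, Function.comp_def] using this
  have h3 : Tendsto (fun ρ : ℝ => 1 + (1 + 3 * (k00 * k22 / k11 ^ 2) / ρ ^ 2) ^ ((1:ℝ)/2)) atTop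
      (nhds 2) := by
    have := (tendsto_const_nhds (x := (1:ℝ)) (f := atTop (α := ℝ))).add h2
    norm_num at this
    exact this
  have := (Real.continuousAt_rpow_const 2 ((1:ℝ)/2) (Or.inr (by norm_num))).tendsto.comp h3
  exact this

lemma hKer_tendsto_atTop :
    Tendsto (hKer k00 k11 k22) atTop
      (nhds ((2:ℝ) ^ (-(1:ℝ)/2) + (2:ℝ) ^ ((1:ℝ)/2))) := by
  have hp := pKer_tendsto_atTop (k00 := k00) (k11 := k11) (k22 := k22)
  have hne : ((2:ℝ) ^ ((1:ℝ)/2)) ≠ 0 := by positivity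
  have h1 : Tendsto (fun ρ => 1 / pKer k00 k11 k22 ρ) atTop (nhds (1 / (2:ℝ) ^ ((1:ℝ)/2))) :=
    tendsto_const_nhds.div hp hne
  have h2 : (1:ℝ) / (2:ℝ) ^ ((1:ℝ)/2) = (2:ℝ) ^ (-(1:ℝ)/2) := by
    rw [neg_div, Real.rpow_neg (by norm_num), one_div]
  rw [← h2]
  exact h1.add hp

end pker

lemma rearrange (k00 k11 k22 a : ℝ) (h00 : 0 < k00) (h11 : 0 < k11)
    {A I QV Q : ℝ} (hA : 0 ≤ A) (hI : 0 < I) (hQV : 0 ≤ QV) (hQ : 0 < Q) :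
    (A / I) ^ ((1:ℝ)/2) * (a * Q ^ ((3:ℝ)/4) * gKer k00 k11 k22 (QV / Q ^ ((1:ℝ)/2))) =
      16/3 * (k00*k11) ^ ((1:ℝ)/2) * A ^ ((1:ℝ)/2) * a * I ^ (-((1:ℝ)/2)) *
        QV ^ ((1:ℝ)/2) * Q ^ ((1:ℝ)/2) * hKer k00 k11 k22 (QV / Q ^ ((1:ℝ)/2)) := by
  have e1 : (A / I) ^ ((1:ℝ)/2) = A ^ ((1:ℝ)/2) * I ^ (-((1:ℝ)/2)) := by
    rw [Real.div_rpow hA hI.le, Real.rpow_neg hI.le, div_eq_mul_inv]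
  have hQh : (0:ℝ) ≤ Q ^ ((1:ℝ)/2) := Real.rpow_nonneg hQ.le _
  have e2 : (QV / Q ^ ((1:ℝ)/2) * k00 * k11) ^ ((1:ℝ)/2)
      = QV ^ ((1:ℝ)/2) * Q ^ (-((1:ℝ)/4)) * (k00*k11) ^ ((1:ℝ)/2) := by
    rw [mul_assoc, Real.mul_rpow (div_nonneg hQV hQh) (by positivity),
      Real.div_rpow hQV hQh, ← Real.rpow_mul hQ.le]
    norm_num
    rw [Real.rpow_neg hQ.le, div_eq_mul_inv]
    norm_num
  have e3 : Q ^ ((3:ℝ)/4) * Q ^ (-((1:ℝ)/4)) = Q ^ ((1:ℝ)/2) := by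
    rw [← Real.rpow_add hQ]; norm_num
  rw [gKer_eq, e1, e2]
  calc A ^ ((1:ℝ)/2) * I ^ (-((1:ℝ)/2)) *
      (a * Q ^ ((3:ℝ)/4) * (16/3 * (QV ^ ((1:ℝ)/2) * Q ^ (-((1:ℝ)/4)) * (k00*k11) ^ ((1:ℝ)/2)) *
        hKer k00 k11 k22 (QV / Q ^ ((1:ℝ)/2))))
      = 16/3 * (k00*k11) ^ ((1:ℝ)/2) * A ^ ((1:ℝ)/2) * a * I ^ (-((1:ℝ)/2)) * QV ^ ((1:ℝ)/2) *
        (Q ^ ((3:ℝ)/4) * Q ^ (-((1:ℝ)/4))) * hKer k00 k11 k22 (QV / Q ^ ((1:ℝ)/2)) := by ring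
    _ = _ := by rw [e3]

lemma rpow_half_cancel {Δ : ℝ} (hΔ : 0 < Δ) : Δ ^ (-((1:ℝ)/2)) * Δ ^ ((1:ℝ)/2) = 1 := by
  rw [← Real.rpow_add hΔ]; norm_num

lemma jumpTerm_eq (k00 k11 k22 a : ℝ) (h00 : 0 < k00) (h11 : 0 < k11)
    {A Δ w QV Q : ℝ} (hA : 0 ≤ A) (hΔ : 0 < Δ) (hw : 0 < w) (hQV : 0 ≤ QV) (hQ : 0 < Q) :
    (A / (Δ * w)) ^ ((1:ℝ)/2) *
        (a * (Δ * Q) ^ ((3:ℝ)/4) * gKer k00 k11 k22 (QV / (Δ * Q) ^ ((1:ℝ)/2))) =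
      16/3 * (k00*k11) ^ ((1:ℝ)/2) * A ^ ((1:ℝ)/2) * a * w ^ (-((1:ℝ)/2)) *
        QV ^ ((1:ℝ)/2) * Q ^ ((1:ℝ)/2) * hKer k00 k11 k22 (QV / (Δ * Q) ^ ((1:ℝ)/2)) := by
  rw [rearrange k00 k11 k22 a h00 h11 hA (by positivity) hQV (by positivity)]
  set H := hKer k00 k11 k22 (QV / (Δ * Q) ^ ((1:ℝ)/2)) with hH
  rw [Real.mul_rpow hΔ.le hw.le, Real.mul_rpow hΔ.le hQ.le]
  calc 16/3 * (k00*k11) ^ ((1:ℝ)/2) * A ^ ((1:ℝ)/2) * a *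
        (Δ ^ (-((1:ℝ)/2)) * w ^ (-((1:ℝ)/2))) * QV ^ ((1:ℝ)/2) *
        (Δ ^ ((1:ℝ)/2) * Q ^ ((1:ℝ)/2)) * H
      = (Δ ^ (-((1:ℝ)/2)) * Δ ^ ((1:ℝ)/2)) * (16/3 * (k00*k11) ^ ((1:ℝ)/2) * A ^ ((1:ℝ)/2) * a *
          w ^ (-((1:ℝ)/2)) * QV ^ ((1:ℝ)/2) * Q ^ ((1:ℝ)/2) * H) := by ring
    _ = _ := by rw [rpow_half_cancel hΔ, one_mul]

lemma contTerm_eq (k00 k11 k22 a : ℝ) (h00 : 0 < k00) (h11 : 0 < k11)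
    {A Δ u v w : ℝ} (hA : 0 ≤ A) (hΔ : 0 < Δ) (hu : 0 ≤ u) (hv : 0 < v) (hw : 0 < w) :
    Δ⁻¹ * ((A / (Δ * w)) ^ ((1:ℝ)/2) *
        (a * (Δ * (Δ * v)) ^ ((3:ℝ)/4) *
          gKer k00 k11 k22 ((Δ * u) / (Δ * (Δ * v)) ^ ((1:ℝ)/2)))) =
      16/3 * (k00*k11) ^ ((1:ℝ)/2) * A ^ ((1:ℝ)/2) * a * w ^ (-((1:ℝ)/2)) *
        u ^ ((1:ℝ)/2) * v ^ ((1:ℝ)/2) * hKer k00 k11 k22 (u / v ^ ((1:ℝ)/2)) := by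
  have hρ : (Δ * u) / (Δ * (Δ * v)) ^ ((1:ℝ)/2) = u / v ^ ((1:ℝ)/2) := by
    have h1 : (Δ * (Δ * v)) ^ ((1:ℝ)/2) = Δ * v ^ ((1:ℝ)/2) := by
      rw [Real.mul_rpow hΔ.le (by positivity), Real.mul_rpow hΔ.le hv.le,
        ← mul_assoc, ← Real.rpow_add hΔ]
      norm_num
    rw [h1, mul_div_mul_left _ _ (ne_of_gt hΔ)]
  rw [hρ]
  have h2 : (Δ * u) / (Δ * (Δ * v)) ^ ((1:ℝ)/2) = u / v ^ ((1:ℝ)/2) := hρ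
  have := rearrange k00 k11 k22 a h00 h11 (A := A) (I := Δ * w) (QV := Δ * u) (Q := Δ * (Δ * v))
    hA (by positivity) (by positivity) (by positivity)
  rw [h2] at this
  rw [this]
  set H := hKer k00 k11 k22 (u / v ^ ((1:ℝ)/2)) with hH
  rw [Real.mul_rpow hΔ.le hw.le, Real.mul_rpow hΔ.le hu]
  have h3 : (Δ * (Δ * v)) ^ ((1:ℝ)/2) = Δ * v ^ ((1:ℝ)/2) := by
    rw [Real.mul_rpow hΔ.le (by positivity), Real.mul_rpow hΔ.le hv.le,
      ← mul_assoc, ← Real.rpow_add hΔ]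
    norm_num
  rw [h3]
  calc Δ⁻¹ * (16/3 * (k00*k11) ^ ((1:ℝ)/2) * A ^ ((1:ℝ)/2) * a *
        (Δ ^ (-((1:ℝ)/2)) * w ^ (-((1:ℝ)/2))) * (Δ ^ ((1:ℝ)/2) * u ^ ((1:ℝ)/2)) *
        (Δ * v ^ ((1:ℝ)/2)) * H)
      = (Δ ^ (-((1:ℝ)/2)) * Δ ^ ((1:ℝ)/2)) * (Δ⁻¹ * Δ) *
        (16/3 * (k00*k11) ^ ((1:ℝ)/2) * A ^ ((1:ℝ)/2) * a * w ^ (-((1:ℝ)/2)) *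
          u ^ ((1:ℝ)/2) * v ^ ((1:ℝ)/2) * H) := by ring
    _ = _ := by rw [rpow_half_cancel hΔ, inv_mul_cancel₀ (ne_of_gt hΔ), one_mul, one_mul]

noncomputable def rkTerm (T a k00 k11 k22 : ℝ) (σ σm α : ℝ → ℝ) {N : ℕ}
    (τ j : Fin N → ℝ) (B i : ℕ) : ℝ :=
  ((∫ s in (0:ℝ)..T, (α s)⁻¹) /
      (∫ s in ((i : ℝ) * T / B)..(((i : ℝ) + 1) * T / B), (α s)⁻¹)) ^ ((1 : ℝ) / 2) *
    (a * ((T / B) * Qjump T σ σm τ j B i) ^ ((3 : ℝ) / 4) *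
      gKer k00 k11 k22
        (QVjump T σ τ j B i / ((T / B) * Qjump T σ σm τ j B i) ^ ((1 : ℝ) / 2)))

/-- no jump lies in block `i` of `B`. -/
def noJ (T : ℝ) {N : ℕ} (τ : Fin N → ℝ) (B i : ℕ) : Prop :=
  ∀ p : Fin N, ¬((i : ℝ) * T / B < τ p ∧ τ p ≤ ((i : ℝ) + 1) * T / B)

noncomputable def blkFun (T a k00 k11 k22 : ℝ) (σ σm α : ℝ → ℝ) {N : ℕ}
    (τ j : Fin N → ℝ) (B : ℕ) (n : ℤ) : ℝ :=
  if 0 ≤ n ∧ n < (B:ℤ) ∧ noJ T τ B n.toNat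
  then (T / B)⁻¹ * rkTerm T a k00 k11 k22 σ σm α τ j B n.toNat else 0

noncomputable def stepF (T a k00 k11 k22 : ℝ) (σ σm α : ℝ → ℝ) {N : ℕ}
    (τ j : Fin N → ℝ) (B : ℕ) (x : ℝ) : ℝ :=
  blkFun T a k00 k11 k22 σ σm α τ j B (blkI T B x)

lemma stepF_measurable (T a k00 k11 k22 : ℝ) (σ σm α : ℝ → ℝ) {N : ℕ}
    (τ j : Fin N → ℝ) (B : ℕ) : Measurable (stepF T a k00 k11 k22 σ σm α τ j B) := by
  have h1 : Measurable fun x : ℝ => (⌈x * (B:ℝ) / T⌉ : ℤ) :=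
    ((measurable_id.mul_const (B:ℝ)).div_const T).ceil
  exact (measurable_of_countable
    (fun z : ℤ => blkFun T a k00 k11 k22 σ σm α τ j B (z - 1))).comp h1

lemma integral_stepF_eq {T : ℝ} (hT : 0 < T) (a k00 k11 k22 : ℝ) (σ σm α : ℝ → ℝ) {N : ℕ}
    (τ j : Fin N → ℝ) {B : ℕ} (hB : 1 ≤ B) :
    ∫ x in (0:ℝ)..T, stepF T a k00 k11 k22 σ σm α τ j B x =
      ∑ i ∈ Finset.range B,
        (if noJ T τ B i then rkTerm T a k00 k11 k22 σ σm α τ j B i else 0) := by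
  have hB0 : (0:ℝ) < B := by exact_mod_cast hB
  set G := stepF T a k00 k11 k22 σ σm α τ j B with hG
  set aseq : ℕ → ℝ := fun k => (k:ℝ) * T / B with haseq
  have hstep : ∀ k : ℕ, aseq k ≤ aseq (k+1) := by
    intro k
    apply div_le_div_of_nonneg_right _ hB0.le
    push_cast; nlinarith
  have hconst : ∀ k : ℕ, ∀ x ∈ Set.Ioc (aseq k) (aseq (k+1)),
      G x = blkFun T a k00 k11 k22 σ σm α τ j B (k:ℤ) := by
    intro k x hx
    have hblk : blkI T B x = (k:ℤ) := by
      rw [blkI_eq_iff hT hB]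
      push_cast
      have hx1 := hx.1
      have hx2 := hx.2
      simp only [haseq] at hx1 hx2
      push_cast at hx1 hx2
      exact ⟨hx1, hx2⟩
    rw [hG]; unfold stepF; rw [hblk]
  have hint : ∀ k < B, IntervalIntegrable G volume (aseq k) (aseq (k+1)) := fun k _ =>
    intervalIntegrable_of_eqOn_Ioc (hstep k) (hconst k)
  have hsum := intervalIntegral.sum_integral_adjacent_intervals (μ := volume) (a := aseq)
    (n := B) hint
  have ha0 : aseq 0 = 0 := by simp [haseq]
  have haB : aseq B = T := by rw [haseq]; field_simp
  rw [ha0, haB] at hsum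
  rw [← hsum]
  apply Finset.sum_congr rfl
  intro k hk
  have hkB : k < B := Finset.mem_range.1 hk
  rw [integral_eq_of_eqOn_Ioc (hstep k) (hconst k)]
  have hlen : aseq (k+1) - aseq k = T / B := by rw [haseq]; push_cast; field_simp; ring
  rw [hlen]
  unfold blkFun
  have htn : ((k:ℤ)).toNat = k := rfl
  rw [htn]
  by_cases hnj : noJ T τ B k
  · rw [if_pos ⟨by exact_mod_cast Nat.zero_le k, by exact_mod_cast hkB, hnj⟩, if_pos hnj]
    field_simp
  · rw [if_neg (by tauto), if_neg hnj]
    simp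


noncomputable def avgI (T : ℝ) (f : ℝ → ℝ) (B i : ℕ) : ℝ :=
  (T / B)⁻¹ * ∫ u in ((i:ℝ)*T/B)..(((i:ℝ)+1)*T/B), f u


set_option maxHeartbeats 1000000 in
/-- Limit of the local RK asymptotic variance when the price process has
finitely many jumps, under stochastic sampling with intensity `α`. -/
theorem stmt15 (T a σlo σhi k00 k11 k22 : ℝ) (hT : 0 < T) (ha : 0 < a)
    (h00 : 0 < k00) (h11 : 0 < k11) (h22 : 0 < k22)
    (hσlo : 0 < σlo) (hσ : σlo ≤ σhi) (σ σm α : ℝ → ℝ)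
    (hrc : ∀ u ∈ Set.Ico (0 : ℝ) T, ContinuousWithinAt σ (Set.Ici u) u)
    (hleft : ∀ u ∈ Set.Ioc (0 : ℝ) T,
      Tendsto σ (nhdsWithin u (Set.Iio u)) (nhds (σm u)))
    (hfin : {u ∈ Set.Icc (0 : ℝ) T |
      ¬ ContinuousWithinAt σ (Set.Icc (0 : ℝ) T) u}.Finite)
    (hbd : ∀ u ∈ Set.Icc (0 : ℝ) T, σlo ≤ σ u ∧ σ u ≤ σhi)
    (hα : ContinuousOn α (Set.Icc 0 T))
    (hαpos : ∀ u ∈ Set.Icc (0 : ℝ) T, 0 < α u)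
    (N : ℕ) (τ j : Fin N → ℝ) (hτmono : StrictMono τ)
    (hτ : ∀ p, 0 < τ p ∧ τ p ≤ T) (hj : ∀ p, j p ≠ 0) :
    Tendsto (fun B : ℕ => ∑ i ∈ Finset.range B,
        ((∫ s in (0:ℝ)..T, (α s)⁻¹) /
            (∫ s in ((i : ℝ) * T / B)..(((i : ℝ) + 1) * T / B), (α s)⁻¹)) ^ ((1 : ℝ) / 2) *
          (a * ((T / B) * Qjump T σ σm τ j B i) ^ ((3 : ℝ) / 4) *
            gKer k00 k11 k22
              (QVjump T σ τ j B i / ((T / B) * Qjump T σ σm τ j B i) ^ ((1 : ℝ) / 2))))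
      atTop
      (nhds (gKer k00 k11 k22 1 * a * (∫ s in (0:ℝ)..T, (α s)⁻¹) ^ ((1 : ℝ) / 2) *
          (∫ s in (0:ℝ)..T, (α s) ^ ((1 : ℝ) / 2) * σ s ^ 3) +
        (16 / 3) * ((2 : ℝ) ^ (-(1 : ℝ) / 2) + (2 : ℝ) ^ ((1 : ℝ) / 2)) *
          (k00 * k11) ^ ((1 : ℝ) / 2) * a *
          (∫ s in (0:ℝ)..T, (α s)⁻¹) ^ ((1 : ℝ) / 2) *
          ∑ p : Fin N,
            j p ^ 2 *
              (σ (τ p) ^ 2 * α (τ p) + σm (τ p) ^ 2 * α (τ p)) ^ ((1 : ℝ) / 2))) := by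

  classical
  have hσhi : 0 < σhi := lt_of_lt_of_le hσlo hσ
  have hd : (0:ℝ) ≤ k00 * k22 / k11 ^ 2 := by positivity
  obtain ⟨mx, hmx, hmax⟩ := isCompact_Icc.exists_isMaxOn (Set.nonempty_Icc.2 hT.le) hα
  obtain ⟨mn, hmn, hmin⟩ := isCompact_Icc.exists_isMinOn (Set.nonempty_Icc.2 hT.le) hα
  set αhi := α mx with hαhidef
  set αlo := α mn with hαlodef
  have hαhi : 0 < αhi := hαpos mx hmx
  have hαlo : 0 < αlo := hαpos mn hmn
  have hαbd : ∀ u ∈ Set.Icc (0:ℝ) T, αlo ≤ α u ∧ α u ≤ αhi :=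
    fun u hu => ⟨hmin hu, hmax hu⟩
  have hαinvbd : ∀ u ∈ Set.Icc (0:ℝ) T, αhi⁻¹ ≤ (α u)⁻¹ ∧ (α u)⁻¹ ≤ αlo⁻¹ := by
    intro u hu
    constructor
    · exact inv_anti₀ (hαpos u hu) (hαbd u hu).2
    · exact inv_anti₀ hαlo (hαbd u hu).1
  have hσ2bd : ∀ u ∈ Set.Icc (0:ℝ) T, σlo^2 ≤ σ u^2 ∧ σ u^2 ≤ σhi^2 := by
    intro u hu
    obtain ⟨h1, h2⟩ := hbd u hu
    exact ⟨pow_le_pow_left₀ hσlo.le h1 2, pow_le_pow_left₀ (by linarith) h2 2⟩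
  have hσ4bd : ∀ u ∈ Set.Icc (0:ℝ) T, σlo^4 ≤ σ u^4 ∧ σ u^4 ≤ σhi^4 := by
    intro u hu
    obtain ⟨h1, h2⟩ := hbd u hu
    exact ⟨pow_le_pow_left₀ hσlo.le h1 4, pow_le_pow_left₀ (by linarith) h2 4⟩
  have hIntσ : ∀ (n : ℕ) (l r : ℝ), 0 ≤ l → r ≤ T → l ≤ r →
      IntervalIntegrable (fun u => σ u ^ n) volume l r := fun n l r h1 h2 h3 =>
    integrable_pow_of_rc hT hrc hbd n h1 h2 h3
  have hαinvcont : ContinuousOn (fun u => (α u)⁻¹) (Set.Icc 0 T) := fun u hu =>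
    ((hα u hu).inv₀ (ne_of_gt (hαpos u hu)))
  have hIntα : ∀ (l r : ℝ), 0 ≤ l → r ≤ T → l ≤ r →
      IntervalIntegrable (fun u => (α u)⁻¹) volume l r := by
    intro l r h1 h2 h3
    apply (hαinvcont.mono _).intervalIntegrable
    rw [Set.uIcc_of_le h3]
    exact Set.Icc_subset_Icc h1 h2
  set A := ∫ s in (0:ℝ)..T, (α s)⁻¹ with hAdef
  have hApos : 0 < A := by
    have h1 : αhi⁻¹ * (T - 0) ≤ A :=
      le_integral_of_le hT.le (hIntα 0 T le_rfl le_rfl hT.le) (fun u hu => (hαinvbd u hu).1)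
    have h2 : 0 < αhi⁻¹ * (T - 0) := mul_pos (inv_pos.2 hαhi) (by linarith)
    linarith
  -- block facts
  have hblk : ∀ (B i : ℕ), 1 ≤ B → i < B →
      0 ≤ (i:ℝ)*T/B ∧ ((i:ℝ)+1)*T/B ≤ T ∧ (i:ℝ)*T/B ≤ ((i:ℝ)+1)*T/B ∧
        ((i:ℝ)+1)*T/B - (i:ℝ)*T/B = T/B := by
    intro B i hB hiB
    have hB0 : (0:ℝ) < B := by exact_mod_cast hB
    have hi1 : ((i:ℝ)+1) ≤ B := by exact_mod_cast hiB
    have hBne : (B:ℝ) ≠ 0 := ne_of_gt hB0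
    refine ⟨by positivity, ?_, ?_, by field_simp; ring⟩
    · rw [div_le_iff₀ hB0]; nlinarith
    · apply div_le_div_of_nonneg_right (by nlinarith) hB0.le
  have hblksub : ∀ (B i : ℕ), 1 ≤ B → i < B →
      Set.Icc ((i:ℝ)*T/B) (((i:ℝ)+1)*T/B) ⊆ Set.Icc (0:ℝ) T := by
    intro B i hB hiB
    obtain ⟨h1, h2, _, _⟩ := hblk B i hB hiB
    exact Set.Icc_subset_Icc h1 h2
  -- average bounds
  have havg_bd : ∀ {f : ℝ → ℝ} {m M : ℝ},
      (∀ u ∈ Set.Icc (0:ℝ) T, m ≤ f u ∧ f u ≤ M) →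
      (∀ (l r : ℝ), 0 ≤ l → r ≤ T → l ≤ r → IntervalIntegrable f volume l r) →
      ∀ (B i : ℕ), 1 ≤ B → i < B → m ≤ avgI T f B i ∧ avgI T f B i ≤ M := by
    intro f m M hfbd hfint B i hB hiB
    obtain ⟨h1, h2, h3, h4⟩ := hblk B i hB hiB
    have hB0 : (0:ℝ) < B := by exact_mod_cast hB
    have hΔ : (0:ℝ) < T / B := by positivity
    have hil := hfint _ _ h1 h2 h3
    have hlow := le_integral_of_le h3 hil (fun u hu => (hfbd u (hblksub B i hB hiB hu)).1)
    have hhigh := integral_le_of_le h3 hil (fun u hu => (hfbd u (hblksub B i hB hiB hu)).2)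
    rw [h4] at hlow hhigh
    unfold avgI
    constructor
    · calc m = (T/B)⁻¹ * (m * (T/B)) := by field_simp
        _ ≤ (T/B)⁻¹ * ∫ u in ((i:ℝ)*T/B)..(((i:ℝ)+1)*T/B), f u :=
          mul_le_mul_of_nonneg_left hlow (by positivity)
    · calc (T/B)⁻¹ * (∫ u in ((i:ℝ)*T/B)..(((i:ℝ)+1)*T/B), f u)
          ≤ (T/B)⁻¹ * (M * (T/B)) := mul_le_mul_of_nonneg_left hhigh (by positivity)
        _ = M := by field_simp
  have hIdelta : ∀ (f : ℝ → ℝ) (B i : ℕ), 1 ≤ B →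
      (∫ u in ((i:ℝ)*T/B)..(((i:ℝ)+1)*T/B), f u) = (T/B) * avgI T f B i := by
    intro f B i hB
    have hB0 : (0:ℝ) < B := by exact_mod_cast hB
    unfold avgI
    rw [← mul_assoc, mul_inv_cancel₀ (by positivity : (T/B) ≠ 0), one_mul]
  -- the core product form on no-jump blocks
  have hform : ∀ (B i : ℕ), 1 ≤ B → i < B → noJ T τ B i →
      (T/B)⁻¹ * rkTerm T a k00 k11 k22 σ σm α τ j B i =
        16/3 * (k00*k11) ^ ((1:ℝ)/2) * A ^ ((1:ℝ)/2) * a *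
          (avgI T (fun s => (α s)⁻¹) B i) ^ (-((1:ℝ)/2)) *
          (avgI T (fun s => σ s^2) B i) ^ ((1:ℝ)/2) *
          (avgI T (fun s => σ s^4) B i) ^ ((1:ℝ)/2) *
          hKer k00 k11 k22
            ((avgI T (fun s => σ s^2) B i) / (avgI T (fun s => σ s^4) B i) ^ ((1:ℝ)/2)) := by
    intro B i hB hiB hnj
    have hB0 : (0:ℝ) < B := by exact_mod_cast hB
    have hΔ : (0:ℝ) < T/B := by positivity
    have hu0 : 0 ≤ avgI T (fun s => σ s^2) B i :=
      le_trans (by positivity) (havg_bd hσ2bd (hIntσ 2) B i hB hiB).1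
    have hv0 : 0 < avgI T (fun s => σ s^4) B i :=
      lt_of_lt_of_le (by positivity) (havg_bd hσ4bd (hIntσ 4) B i hB hiB).1
    have hw0 : 0 < avgI T (fun s => (α s)⁻¹) B i :=
      lt_of_lt_of_le (by positivity) (havg_bd hαinvbd hIntα B i hB hiB).1
    have hQ : Qjump T σ σm τ j B i = ∫ u in ((i:ℝ)*T/B)..(((i:ℝ)+1)*T/B), σ u ^ 4 := by
      unfold Qjump
      rw [Finset.sum_eq_zero (fun p _ => if_neg (hnj p)), add_zero]
    have hQV : QVjump T σ τ j B i = ∫ u in ((i:ℝ)*T/B)..(((i:ℝ)+1)*T/B), σ u ^ 2 := by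
      unfold QVjump
      rw [Finset.sum_eq_zero (fun p _ => if_neg (hnj p)), add_zero]
    unfold rkTerm
    rw [hQ, hQV, hIdelta (fun u => σ u^4) B i hB, hIdelta (fun u => σ u^2) B i hB,
      hIdelta (fun s => (α s)⁻¹) B i hB, ← hAdef]
    exact contTerm_eq k00 k11 k22 a h00 h11 hApos.le hΔ hu0 hv0 hw0
  -- rpow helpers
  have hinvhalf : ∀ y : ℝ, 0 < y → (y⁻¹) ^ (-((1:ℝ)/2)) = y ^ ((1:ℝ)/2) := by
    intro y hy
    rw [Real.inv_rpow hy.le, Real.rpow_neg hy.le, inv_inv]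
  have hsq : ∀ y : ℝ, 0 ≤ y → (y^2) ^ ((1:ℝ)/2) = y := by
    intro y hy
    rw [← Real.rpow_natCast y 2, ← Real.rpow_mul hy]
    norm_num
  have hsq4 : ∀ y : ℝ, 0 ≤ y → (y^4) ^ ((1:ℝ)/2) = y^2 := by
    intro y hy
    have h1 : y^4 = (y^2)^2 := by ring
    rw [h1, hsq (y^2) (by positivity)]
  -- uniform bound for the step functions
  set ρmin : ℝ := σlo^2 / (σhi^4) ^ ((1:ℝ)/2) with hρmindef
  have hρmin : 0 < ρmin := by
    rw [hρmindef]
    apply div_pos (by positivity)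
    exact Real.rpow_pos_of_pos (by positivity) _
  set Cbd : ℝ := 16/3 * (k00*k11) ^ ((1:ℝ)/2) * A ^ ((1:ℝ)/2) * a * αhi ^ ((1:ℝ)/2) *
      (σhi^2) ^ ((1:ℝ)/2) * (σhi^4) ^ ((1:ℝ)/2) * (1 + pKer k00 k11 k22 ρmin) with hCdef
  have hpKmin : 1 ≤ pKer k00 k11 k22 ρmin := one_le_pKer hd ρmin
  have hCbd0 : 0 ≤ Cbd := by
    rw [hCdef]
    have h1 : (0:ℝ) ≤ 1 + pKer k00 k11 k22 ρmin := by linarith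
    have h2 : (0:ℝ) ≤ 16/3 * (k00*k11) ^ ((1:ℝ)/2) * A ^ ((1:ℝ)/2) * a * αhi ^ ((1:ℝ)/2) *
        (σhi^2) ^ ((1:ℝ)/2) * (σhi^4) ^ ((1:ℝ)/2) := by positivity
    exact mul_nonneg h2 h1
  have hstep_bd : ∀ (B : ℕ) (x : ℝ), ‖stepF T a k00 k11 k22 σ σm α τ j B x‖ ≤ Cbd := by
    intro B x
    unfold stepF blkFun
    by_cases hc : 0 ≤ blkI T B x ∧ blkI T B x < (B:ℤ) ∧ noJ T τ B (blkI T B x).toNat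
    · rw [if_pos hc]
      obtain ⟨hc1, hc2, hc3⟩ := hc
      set i := (blkI T B x).toNat with hidef
      have hiB : i < B := by
        have h1 : ((i:ℕ):ℤ) < (B:ℤ) := by rw [hidef, Int.toNat_of_nonneg hc1]; exact hc2
        exact_mod_cast h1
      have hB : 1 ≤ B := Nat.one_le_iff_ne_zero.2 (by omega)
      rw [hform B i hB hiB hc3]
      obtain ⟨hu1, hu2⟩ := havg_bd hσ2bd (hIntσ 2) B i hB hiB
      obtain ⟨hv1, hv2⟩ := havg_bd hσ4bd (hIntσ 4) B i hB hiB
      obtain ⟨hw1, hw2⟩ := havg_bd hαinvbd hIntα B i hB hiB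
      have hu0 : 0 ≤ avgI T (fun s => σ s^2) B i := le_trans (by positivity) hu1
      have hv0 : 0 < avgI T (fun s => σ s^4) B i := lt_of_lt_of_le (by positivity) hv1
      have hw0 : 0 < avgI T (fun s => (α s)⁻¹) B i :=
        lt_of_lt_of_le (lt_of_le_of_lt (le_refl 0) (inv_pos.2 hαhi)) hw1
      have hvh0 : 0 < (avgI T (fun s => σ s^4) B i) ^ ((1:ℝ)/2) := Real.rpow_pos_of_pos hv0 _
      have hρge : ρmin ≤ avgI T (fun s => σ s^2) B i / (avgI T (fun s => σ s^4) B i) ^ ((1:ℝ)/2) := by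
        rw [hρmindef]
        exact div_le_div₀ hu0 hu1 hvh0 (Real.rpow_le_rpow hv0.le hv2 (by norm_num))
      have hh : hKer k00 k11 k22
            ((avgI T (fun s => σ s^2) B i) / (avgI T (fun s => σ s^4) B i) ^ ((1:ℝ)/2))
          ≤ 1 + pKer k00 k11 k22 ρmin := hKer_le hd hρmin hρge
      have hh0 : 0 ≤ hKer k00 k11 k22
          ((avgI T (fun s => σ s^2) B i) / (avgI T (fun s => σ s^4) B i) ^ ((1:ℝ)/2)) :=
        hKer_nonneg hd _
      have hwb : (avgI T (fun s => (α s)⁻¹) B i) ^ (-((1:ℝ)/2)) ≤ αhi ^ ((1:ℝ)/2) := by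
        rw [← hinvhalf αhi hαhi]
        exact Real.rpow_le_rpow_of_nonpos (inv_pos.2 hαhi) hw1 (by norm_num)
      have hub : (avgI T (fun s => σ s^2) B i) ^ ((1:ℝ)/2) ≤ (σhi^2) ^ ((1:ℝ)/2) :=
        Real.rpow_le_rpow hu0 hu2 (by norm_num)
      have hvb : (avgI T (fun s => σ s^4) B i) ^ ((1:ℝ)/2) ≤ (σhi^4) ^ ((1:ℝ)/2) :=
        Real.rpow_le_rpow hv0.le hv2 (by norm_num)
      have hnn : 0 ≤ 16/3 * (k00*k11) ^ ((1:ℝ)/2) * A ^ ((1:ℝ)/2) * a *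
          (avgI T (fun s => (α s)⁻¹) B i) ^ (-((1:ℝ)/2)) *
          (avgI T (fun s => σ s^2) B i) ^ ((1:ℝ)/2) *
          (avgI T (fun s => σ s^4) B i) ^ ((1:ℝ)/2) *
          hKer k00 k11 k22
            ((avgI T (fun s => σ s^2) B i) / (avgI T (fun s => σ s^4) B i) ^ ((1:ℝ)/2)) := by
        have : (0:ℝ) ≤ 16/3 * (k00*k11) ^ ((1:ℝ)/2) * A ^ ((1:ℝ)/2) * a *
            (avgI T (fun s => (α s)⁻¹) B i) ^ (-((1:ℝ)/2)) *
            (avgI T (fun s => σ s^2) B i) ^ ((1:ℝ)/2) *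
            (avgI T (fun s => σ s^4) B i) ^ ((1:ℝ)/2) := by positivity
        exact mul_nonneg this hh0
      rw [Real.norm_eq_abs, abs_of_nonneg hnn, hCdef]
      have hKle : 0 ≤ 16/3 * (k00*k11) ^ ((1:ℝ)/2) * A ^ ((1:ℝ)/2) * a := by positivity
      gcongr <;> first
        | exact hwb
        | exact hub
        | exact hvb
        | exact hh
        | positivity
        | exact le_trans (by positivity) hwb
        | exact le_trans (by positivity) hub
    · rw [if_neg hc]
      simpa using hCbd0
  -- block-average convergence in ℕ-indexed form
  have havgx : ∀ {x : ℝ}, 0 < x → x ≤ T → ∀ {f : ℝ → ℝ} {L : ℝ},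
      (∀ (l r : ℝ), 0 ≤ l → r ≤ T → l ≤ r → IntervalIntegrable f volume l r) →
      Tendsto f (nhdsWithin x (Set.Icc 0 T)) (nhds L) →
      Tendsto (fun B : ℕ => avgI T f B ((blkI T B x).toNat)) atTop (nhds L) := by
    intro x hx0 hxT f L hfi hfc
    have h1 := avg_tendsto hT hx0 hxT hfi hfc
    apply h1.congr'
    filter_upwards [eventually_ge_atTop 1] with B hB
    obtain ⟨hb0, _, _, _⟩ := blkI_mem hT hB hx0 hxT
    have hcast : (((blkI T B x).toNat : ℕ) : ℝ) = ((blkI T B x : ℤ) : ℝ) := by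
      exact_mod_cast congrArg (Int.cast : ℤ → ℝ) (Int.toNat_of_nonneg hb0)
    unfold avgI
    rw [hcast]
  -- pointwise limit of the step functions
  have hpt : ∀ x : ℝ, x ∈ Set.Ioc (0:ℝ) T → ContinuousWithinAt σ (Set.Icc 0 T) x →
      (∀ p, τ p ≠ x) →
      Tendsto (fun B => stepF T a k00 k11 k22 σ σm α τ j B x) atTop
        (nhds ((16/3 * (k00*k11) ^ ((1:ℝ)/2) * A ^ ((1:ℝ)/2) * a * hKer k00 k11 k22 1) *
          ((α x) ^ ((1:ℝ)/2) * σ x ^ 3))) := by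
    intro x hx hσc hτx
    have hx0 : 0 < x := hx.1
    have hxT : x ≤ T := hx.2
    have hxI : x ∈ Set.Icc (0:ℝ) T := ⟨hx0.le, hxT⟩
    have hσx : 0 < σ x := lt_of_lt_of_le hσlo (hbd x hxI).1
    have hαx : 0 < α x := hαpos x hxI
    -- eventually the block of x contains no jump
    have hnoJ : ∀ᶠ B : ℕ in atTop, noJ T τ B ((blkI T B x).toNat) := by
      unfold noJ
      rw [eventually_all]
      intro p
      have hne : 0 < |τ p - x| := abs_pos.2 (sub_ne_zero.2 (hτx p))
      have hev := (tendsto_const_div_atTop_nhds_zero_nat T).eventually_lt_const hne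
      filter_upwards [hev, eventually_ge_atTop 1] with B h1 hB
      rintro ⟨ha1, ha2⟩
      obtain ⟨hb0, hbB, hb1, hb2⟩ := blkI_mem hT hB hx0 hxT
      have hB0 : (0:ℝ) < B := by exact_mod_cast hB
      have hBne : (B:ℝ) ≠ 0 := ne_of_gt hB0
      have hcast : (((blkI T B x).toNat : ℕ) : ℝ) = ((blkI T B x : ℤ) : ℝ) := by
        exact_mod_cast congrArg (Int.cast : ℤ → ℝ) (Int.toNat_of_nonneg hb0)
      rw [hcast] at ha1 ha2
      have hΔeq : ((blkI T B x : ℝ)+1)*T/B - (blkI T B x : ℝ)*T/B = T/B := by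
        field_simp; ring
      have habs : |τ p - x| < T/B := by
        rw [abs_sub_lt_iff]
        constructor
        · linarith
        · linarith
      linarith
    -- eventual product form
    have hev : ∀ᶠ B : ℕ in atTop,
        stepF T a k00 k11 k22 σ σm α τ j B x =
        16/3 * (k00*k11) ^ ((1:ℝ)/2) * A ^ ((1:ℝ)/2) * a *
          (avgI T (fun s => (α s)⁻¹) B ((blkI T B x).toNat)) ^ (-((1:ℝ)/2)) *
          (avgI T (fun s => σ s^2) B ((blkI T B x).toNat)) ^ ((1:ℝ)/2) *
          (avgI T (fun s => σ s^4) B ((blkI T B x).toNat)) ^ ((1:ℝ)/2) *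
          hKer k00 k11 k22
            ((avgI T (fun s => σ s^2) B ((blkI T B x).toNat)) /
              (avgI T (fun s => σ s^4) B ((blkI T B x).toNat)) ^ ((1:ℝ)/2)) := by
      filter_upwards [hnoJ, eventually_ge_atTop 1] with B hnj hB
      obtain ⟨hb0, hbB, _, _⟩ := blkI_mem hT hB hx0 hxT
      unfold stepF blkFun
      rw [if_pos ⟨hb0, hbB, hnj⟩]
      have hiB : (blkI T B x).toNat < B := by
        have h1 : (((blkI T B x).toNat : ℕ) : ℤ) < (B:ℤ) := by
          rw [Int.toNat_of_nonneg hb0]; exact hbB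
        exact_mod_cast h1
      exact hform B ((blkI T B x).toNat) hB hiB hnj
    -- limits of the three averages
    have hu := havgx hx0 hxT (hIntσ 2) (hσc.pow 2)
    have hv := havgx hx0 hxT (hIntσ 4) (hσc.pow 4)
    have hwc : ContinuousWithinAt (fun s => (α s)⁻¹) (Set.Icc 0 T) x :=
      (hα x hxI).inv₀ (ne_of_gt hαx)
    have hw := havgx hx0 hxT hIntα hwc
    have hvh : Tendsto (fun B : ℕ => (avgI T (fun s => σ s^4) B ((blkI T B x).toNat)) ^ ((1:ℝ)/2))
        atTop (nhds ((σ x ^ 4) ^ ((1:ℝ)/2))) := hv.rpow_const (Or.inr (by norm_num))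
    have hρ1 : Tendsto (fun B : ℕ => (avgI T (fun s => σ s^2) B ((blkI T B x).toNat)) /
        (avgI T (fun s => σ s^4) B ((blkI T B x).toNat)) ^ ((1:ℝ)/2)) atTop (nhds 1) := by
      have hne : (σ x ^ 4) ^ ((1:ℝ)/2) ≠ 0 := by
        rw [hsq4 (σ x) hσx.le]; positivity
      have h1 := hu.div hvh hne
      have h2 : σ x ^ 2 / (σ x ^ 4) ^ ((1:ℝ)/2) = 1 := by
        rw [hsq4 (σ x) hσx.le]; field_simp
      rwa [Pi.pow_apply, h2] at h1
    have hh1 : Tendsto (fun B : ℕ => hKer k00 k11 k22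
        ((avgI T (fun s => σ s^2) B ((blkI T B x).toNat)) /
          (avgI T (fun s => σ s^4) B ((blkI T B x).toNat)) ^ ((1:ℝ)/2)))
        atTop (nhds (hKer k00 k11 k22 1)) :=
      (hKer_continuousAt hd one_ne_zero).tendsto.comp hρ1
    have hwt : Tendsto (fun B : ℕ =>
        (avgI T (fun s => (α s)⁻¹) B ((blkI T B x).toNat)) ^ (-((1:ℝ)/2)))
        atTop (nhds ((α x) ^ ((1:ℝ)/2))) := by
      have h1 := hw.rpow_const (p := -((1:ℝ)/2)) (Or.inl (ne_of_gt (inv_pos.2 hαx)))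
      rwa [hinvhalf (α x) hαx] at h1
    have hut : Tendsto (fun B : ℕ =>
        (avgI T (fun s => σ s^2) B ((blkI T B x).toNat)) ^ ((1:ℝ)/2))
        atTop (nhds (σ x)) := by
      have h1 := hu.rpow_const (p := (1:ℝ)/2) (Or.inr (by norm_num))
      rwa [Pi.pow_apply, hsq (σ x) hσx.le] at h1
    have hvt : Tendsto (fun B : ℕ =>
        (avgI T (fun s => σ s^4) B ((blkI T B x).toNat)) ^ ((1:ℝ)/2))
        atTop (nhds (σ x ^ 2)) := by
      have h1 := hv.rpow_const (p := (1:ℝ)/2) (Or.inr (by norm_num))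
      rwa [Pi.pow_apply, hsq4 (σ x) hσx.le] at h1
    refine Tendsto.congr' (hev.mono fun B h => h.symm) ?_
    have htot := ((((tendsto_const_nhds (x := 16/3 * (k00*k11) ^ ((1:ℝ)/2) * A ^ ((1:ℝ)/2) * a)
        (f := atTop (α := ℕ))).mul hwt).mul hut).mul hvt).mul hh1
    have hval : 16/3 * (k00*k11) ^ ((1:ℝ)/2) * A ^ ((1:ℝ)/2) * a *
        (α x) ^ ((1:ℝ)/2) * σ x * σ x ^ 2 * hKer k00 k11 k22 1 =
        (16/3 * (k00*k11) ^ ((1:ℝ)/2) * A ^ ((1:ℝ)/2) * a * hKer k00 k11 k22 1) *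
          ((α x) ^ ((1:ℝ)/2) * σ x ^ 3) := by ring
    rwa [hval] at htot
  -- dominated convergence for the continuous part
  have hDCT : Tendsto (fun B : ℕ => ∫ x in (0:ℝ)..T, stepF T a k00 k11 k22 σ σm α τ j B x) atTop
      (nhds (∫ x in (0:ℝ)..T, (16/3 * (k00*k11) ^ ((1:ℝ)/2) * A ^ ((1:ℝ)/2) * a *
        hKer k00 k11 k22 1) * ((α x) ^ ((1:ℝ)/2) * σ x ^ 3))) := by
    apply intervalIntegral.tendsto_integral_filter_of_dominated_convergence (fun _ => Cbd)
    · exact Filter.Eventually.of_forall fun B =>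
        (stepF_measurable T a k00 k11 k22 σ σm α τ j B).aestronglyMeasurable
    · exact Filter.Eventually.of_forall fun B => (ae_of_all _ fun x _ => hstep_bd B x)
    · exact intervalIntegrable_const
    · have hbadnull : volume ({u | u ∈ Set.Icc (0:ℝ) T ∧
          ¬ ContinuousWithinAt σ (Set.Icc (0:ℝ) T) u} ∪ Set.range τ) = 0 :=
        (hfin.union (Set.finite_range τ)).measure_zero _
      have hae := measure_eq_zero_iff_ae_notMem.1 hbadnull
      filter_upwards [hae] with x hxbad hxmem
      rw [Set.uIoc_of_le hT.le] at hxmem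
      have hσc : ContinuousWithinAt σ (Set.Icc 0 T) x := by
        by_contra hcon
        exact hxbad (Or.inl ⟨⟨hxmem.1.le, hxmem.2⟩, hcon⟩)
      exact hpt x hxmem hσc (fun p hp => hxbad (Or.inr ⟨p, hp⟩))
  have hS1 : Tendsto (fun B : ℕ => ∑ i ∈ Finset.range B,
      (if noJ T τ B i then rkTerm T a k00 k11 k22 σ σm α τ j B i else 0)) atTop
      (nhds (gKer k00 k11 k22 1 * a * A ^ ((1:ℝ)/2) *
        (∫ s in (0:ℝ)..T, (α s) ^ ((1:ℝ)/2) * σ s ^ 3))) := by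
    have heq : (fun B : ℕ => ∫ x in (0:ℝ)..T, stepF T a k00 k11 k22 σ σm α τ j B x) =ᶠ[atTop]
        (fun B : ℕ => ∑ i ∈ Finset.range B,
          (if noJ T τ B i then rkTerm T a k00 k11 k22 σ σm α τ j B i else 0)) := by
      filter_upwards [eventually_ge_atTop 1] with B hB
      exact integral_stepF_eq hT a k00 k11 k22 σ σm α τ j hB
    refine Tendsto.congr' heq ?_
    have hval : (∫ x in (0:ℝ)..T, (16/3 * (k00*k11) ^ ((1:ℝ)/2) * A ^ ((1:ℝ)/2) * a *
          hKer k00 k11 k22 1) * ((α x) ^ ((1:ℝ)/2) * σ x ^ 3))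
        = gKer k00 k11 k22 1 * a * A ^ ((1:ℝ)/2) *
          (∫ s in (0:ℝ)..T, (α s) ^ ((1:ℝ)/2) * σ s ^ 3) := by
      rw [intervalIntegral.integral_const_mul, gKer_eq,
        show (1:ℝ) * k00 * k11 = k00 * k11 by ring]
      ring
    rw [← hval]
    exact hDCT
  -- jump blocks are eventually separated
  have hsep : ∀ᶠ B : ℕ in atTop, 1 ≤ B ∧
      ∀ p q : Fin N, p ≠ q → blkI T B (τ p) ≠ blkI T B (τ q) := by
    have hpair : ∀ᶠ B : ℕ in atTop, ∀ pq : Fin N × Fin N,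
        pq.1 ≠ pq.2 → T/(B:ℝ) < |τ pq.1 - τ pq.2| := by
      rw [eventually_all]
      intro pq
      by_cases hpq : pq.1 = pq.2
      · exact Filter.Eventually.of_forall fun B h => absurd hpq h
      · have hne : 0 < |τ pq.1 - τ pq.2| :=
          abs_pos.2 (sub_ne_zero.2 fun h => hpq (hτmono.injective h))
        filter_upwards [(tendsto_const_div_atTop_nhds_zero_nat T).eventually_lt_const hne]
          with B h1 _
        exact h1
    filter_upwards [hpair, eventually_ge_atTop 1] with B hp hB
    refine ⟨hB, fun p q hpq heq => ?_⟩
    obtain ⟨hp0, hpB, hp1, hp2⟩ := blkI_mem hT hB (hτ p).1 (hτ p).2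
    obtain ⟨hq0, hqB, hq1, hq2⟩ := blkI_mem hT hB (hτ q).1 (hτ q).2
    rw [← heq] at hq1 hq2
    have hB0 : (0:ℝ) < B := by exact_mod_cast hB
    have hBne : (B:ℝ) ≠ 0 := ne_of_gt hB0
    have hΔeq : ((blkI T B (τ p) : ℝ)+1)*T/B - (blkI T B (τ p) : ℝ)*T/B = T/B := by
      field_simp; ring
    have habs : |τ p - τ q| < T/B := by
      rw [abs_sub_lt_iff]
      constructor
      · linarith
      · linarith
    linarith [hp (p, q) hpq]
  -- the jump part of the sum collapses to a finite sum over the jumps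
  have hS2eq : ∀ᶠ B : ℕ in atTop,
      (∑ i ∈ Finset.range B,
        (if noJ T τ B i then 0 else rkTerm T a k00 k11 k22 σ σm α τ j B i))
      = ∑ p : Fin N, rkTerm T a k00 k11 k22 σ σm α τ j B ((blkI T B (τ p)).toNat) := by
    filter_upwards [hsep] with B hsepB
    obtain ⟨hB, hsB⟩ := hsepB
    have hflip : ∀ i, (if noJ T τ B i then 0 else rkTerm T a k00 k11 k22 σ σm α τ j B i)
        = (if ¬ noJ T τ B i then rkTerm T a k00 k11 k22 σ σm α τ j B i else 0) := by
      intro i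
      by_cases h : noJ T τ B i <;> simp [h]
    rw [Finset.sum_congr rfl (fun i _ => hflip i), ← Finset.sum_filter]
    have himg : (Finset.range B).filter (fun i => ¬ noJ T τ B i)
        = Finset.image (fun p : Fin N => (blkI T B (τ p)).toNat) Finset.univ := by
      ext i
      simp only [Finset.mem_filter, Finset.mem_range, Finset.mem_image, Finset.mem_univ,
        true_and]
      constructor
      · rintro ⟨hiB, hnoJ⟩
        unfold noJ at hnoJ
        push_neg at hnoJ
        obtain ⟨p, hp1, hp2⟩ := hnoJ
        refine ⟨p, ?_⟩
        have heq : blkI T B (τ p) = (i:ℤ) := by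
          rw [blkI_eq_iff hT hB]
          constructor
          · exact_mod_cast hp1
          · exact_mod_cast hp2
        rw [heq]
        simp
      · rintro ⟨p, rfl⟩
        obtain ⟨hb0, hbB, hb1, hb2⟩ := blkI_mem hT hB (hτ p).1 (hτ p).2
        have hcast : (((blkI T B (τ p)).toNat : ℕ) : ℝ) = ((blkI T B (τ p) : ℤ) : ℝ) := by
          exact_mod_cast congrArg (Int.cast : ℤ → ℝ) (Int.toNat_of_nonneg hb0)
        constructor
        · have h1 : (((blkI T B (τ p)).toNat : ℕ) : ℤ) < (B:ℤ) := by
            rw [Int.toNat_of_nonneg hb0]; exact hbB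
          exact_mod_cast h1
        · unfold noJ
          push_neg
          exact ⟨p, by rw [hcast]; exact hb1, by rw [hcast]; exact hb2⟩
    rw [himg, Finset.sum_image ?inj]
    case inj =>
      intro p _ q _ hpq
      by_contra hne
      have h0p := (blkI_mem hT hB (hτ p).1 (hτ p).2).1
      have h0q := (blkI_mem hT hB (hτ q).1 (hτ q).2).1
      have h1 : blkI T B (τ p) = blkI T B (τ q) := by
        rw [← Int.toNat_of_nonneg h0p, ← Int.toNat_of_nonneg h0q]; exact congrArg _ hpq
      exact hsB p q hne h1
  -- per-jump limit
  have hjp : ∀ p : Fin N, Tendsto (fun B : ℕ =>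
      rkTerm T a k00 k11 k22 σ σm α τ j B ((blkI T B (τ p)).toNat)) atTop
      (nhds (16/3 * (k00*k11) ^ ((1:ℝ)/2) * A ^ ((1:ℝ)/2) * a *
        ((2:ℝ) ^ (-(1:ℝ)/2) + (2:ℝ) ^ ((1:ℝ)/2)) *
        (j p ^ 2 * (σ (τ p)^2 * α (τ p) + σm (τ p)^2 * α (τ p)) ^ ((1:ℝ)/2)))) := by
    intro p
    have hx0 : 0 < τ p := (hτ p).1
    have hxT : τ p ≤ T := (hτ p).2
    have hxI : τ p ∈ Set.Icc (0:ℝ) T := ⟨hx0.le, hxT⟩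
    have hατ : 0 < α (τ p) := hαpos _ hxI
    have hστ : 0 < σ (τ p) := lt_of_lt_of_le hσlo (hbd _ hxI).1
    have hj2 : (0:ℝ) < j p ^ 2 :=
      lt_of_le_of_ne (sq_nonneg _) (Ne.symm (pow_ne_zero 2 (hj p)))
    set cp : ℝ := j p ^ 2 * (σ (τ p)^2 + σm (τ p)^2) with hcpdef
    have hcp : 0 < cp := by
      rw [hcpdef]
      apply mul_pos hj2
      nlinarith [sq_nonneg (σm (τ p)), hστ]
    -- basic block facts for the block of τ p
    have hblkp : ∀ B : ℕ, 1 ≤ B → ((blkI T B (τ p)).toNat < B ∧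
        (((blkI T B (τ p)).toNat : ℝ) = ((blkI T B (τ p) : ℤ) : ℝ))) := by
      intro B hB
      obtain ⟨hb0, hbB, _, _⟩ := blkI_mem hT hB hx0 hxT
      constructor
      · have h1 : (((blkI T B (τ p)).toNat : ℕ) : ℤ) < (B:ℤ) := by
          rw [Int.toNat_of_nonneg hb0]; exact hbB
        exact_mod_cast h1
      · exact_mod_cast congrArg (Int.cast : ℤ → ℝ) (Int.toNat_of_nonneg hb0)
    -- positivity of the quarticity
    have hQpos : ∀ B : ℕ, 1 ≤ B → 0 < Qjump T σ σm τ j B ((blkI T B (τ p)).toNat) := by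
      intro B hB
      obtain ⟨hiB, _⟩ := hblkp B hB
      obtain ⟨h1, h2, h3, h4⟩ := hblk B ((blkI T B (τ p)).toNat) hB hiB
      have hB0 : (0:ℝ) < B := by exact_mod_cast hB
      have hint := le_integral_of_le h3 (hIntσ 4 _ _ h1 h2 h3)
        (fun u hu => (hσ4bd u (hblksub B _ hB hiB hu)).1)
      rw [h4] at hint
      have hsum : 0 ≤ ∑ q : Fin N,
          (if ((blkI T B (τ p)).toNat : ℝ) * T / B < τ q ∧
              τ q ≤ (((blkI T B (τ p)).toNat : ℝ) + 1) * T / B then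
            j q ^ 2 * (σ (τ q) ^ 2 + σm (τ q) ^ 2) else 0) := by
        apply Finset.sum_nonneg
        intro q _
        by_cases h : ((blkI T B (τ p)).toNat : ℝ) * T / B < τ q ∧
            τ q ≤ (((blkI T B (τ p)).toNat : ℝ) + 1) * T / B
        · rw [if_pos h]; positivity
        · rw [if_neg h]
      unfold Qjump
      have hσlo4 : 0 < σlo^4 * (T/B) := by positivity
      linarith
    have hQVnn : ∀ B : ℕ, 1 ≤ B → 0 ≤ QVjump T σ τ j B ((blkI T B (τ p)).toNat) := by
      intro B hB
      obtain ⟨hiB, _⟩ := hblkp B hB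
      obtain ⟨h1, h2, h3, h4⟩ := hblk B ((blkI T B (τ p)).toNat) hB hiB
      have hint := le_integral_of_le h3 (hIntσ 2 _ _ h1 h2 h3)
        (fun u hu => (hσ2bd u (hblksub B _ hB hiB hu)).1)
      rw [h4] at hint
      have hsum : 0 ≤ ∑ q : Fin N,
          (if ((blkI T B (τ p)).toNat : ℝ) * T / B < τ q ∧
              τ q ≤ (((blkI T B (τ p)).toNat : ℝ) + 1) * T / B then j q ^ 2 else 0) := by
        apply Finset.sum_nonneg
        intro q _
        by_cases h : ((blkI T B (τ p)).toNat : ℝ) * T / B < τ q ∧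
            τ q ≤ (((blkI T B (τ p)).toNat : ℝ) + 1) * T / B
        · rw [if_pos h]; positivity
        · rw [if_neg h]
      unfold QVjump
      have hσlo2 : 0 ≤ σlo^2 * (T/B) := by positivity
      linarith
    -- eventually the jump sums collapse to the single jump p
    have hsingle : ∀ᶠ B : ℕ in atTop,
        Qjump T σ σm τ j B ((blkI T B (τ p)).toNat) =
          (∫ u in (((blkI T B (τ p)).toNat : ℝ) * T / B)..((((blkI T B (τ p)).toNat : ℝ) + 1) * T / B), σ u ^ 4) + cp ∧
        QVjump T σ τ j B ((blkI T B (τ p)).toNat) =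
          (∫ u in (((blkI T B (τ p)).toNat : ℝ) * T / B)..((((blkI T B (τ p)).toNat : ℝ) + 1) * T / B), σ u ^ 2) + j p ^ 2 := by
      filter_upwards [hsep] with B hsepB
      obtain ⟨hB, hsB⟩ := hsepB
      obtain ⟨hb0, hbB, hb1, hb2⟩ := blkI_mem hT hB hx0 hxT
      obtain ⟨hiB, hcast⟩ := hblkp B hB
      have hcond : ∀ q : Fin N, (((blkI T B (τ p)).toNat : ℝ) * T / B < τ q ∧
          τ q ≤ (((blkI T B (τ p)).toNat : ℝ) + 1) * T / B) ↔ q = p := by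
        intro q
        constructor
        · intro hq
          by_contra hne
          apply hsB q p hne
          rw [blkI_eq_iff hT hB]
          rw [hcast] at hq
          exact hq
        · rintro rfl
          rw [hcast]
          exact ⟨hb1, hb2⟩
      constructor
      · unfold Qjump
        congr 1
        rw [Finset.sum_eq_single p (fun q _ hq => if_neg (fun hc => hq ((hcond q).1 hc)))
          (fun h => absurd (Finset.mem_univ p) h), if_pos ((hcond p).2 rfl), hcpdef]
      · unfold QVjump
        congr 1
        rw [Finset.sum_eq_single p (fun q _ hq => if_neg (fun hc => hq ((hcond q).1 hc)))
          (fun h => absurd (Finset.mem_univ p) h), if_pos ((hcond p).2 rfl)]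
    -- eventual product form of the jump term
    have hev : ∀ᶠ B : ℕ in atTop,
        rkTerm T a k00 k11 k22 σ σm α τ j B ((blkI T B (τ p)).toNat) =
        16/3 * (k00*k11) ^ ((1:ℝ)/2) * A ^ ((1:ℝ)/2) * a *
          (avgI T (fun s => (α s)⁻¹) B ((blkI T B (τ p)).toNat)) ^ (-((1:ℝ)/2)) *
          (QVjump T σ τ j B ((blkI T B (τ p)).toNat)) ^ ((1:ℝ)/2) *
          (Qjump T σ σm τ j B ((blkI T B (τ p)).toNat)) ^ ((1:ℝ)/2) *
          hKer k00 k11 k22 (QVjump T σ τ j B ((blkI T B (τ p)).toNat) /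
            ((T/B) * Qjump T σ σm τ j B ((blkI T B (τ p)).toNat)) ^ ((1:ℝ)/2)) := by
      filter_upwards [eventually_ge_atTop 1] with B hB
      obtain ⟨hiB, _⟩ := hblkp B hB
      have hB0 : (0:ℝ) < B := by exact_mod_cast hB
      have hΔ : (0:ℝ) < T/B := by positivity
      have hw0 : 0 < avgI T (fun s => (α s)⁻¹) B ((blkI T B (τ p)).toNat) :=
        lt_of_lt_of_le (inv_pos.2 hαhi) (havg_bd hαinvbd hIntα B _ hB hiB).1
      unfold rkTerm
      rw [hIdelta (fun s => (α s)⁻¹) B ((blkI T B (τ p)).toNat) hB, ← hAdef]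
      exact jumpTerm_eq k00 k11 k22 a h00 h11 hApos.le hΔ hw0 (hQVnn B hB) (hQpos B hB)
    -- limits of the pieces
    have hw := havgx hx0 hxT hIntα ((hα _ hxI).inv₀ (ne_of_gt hατ))
    have hwt : Tendsto (fun B : ℕ =>
        (avgI T (fun s => (α s)⁻¹) B ((blkI T B (τ p)).toNat)) ^ (-((1:ℝ)/2)))
        atTop (nhds ((α (τ p)) ^ ((1:ℝ)/2))) := by
      have h1 : Tendsto _ atTop (nhds (((α (τ p))⁻¹) ^ (-((1:ℝ)/2)))) :=
        hw.rpow_const (p := -((1:ℝ)/2)) (Or.inl (ne_of_gt (inv_pos.2 hατ)))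
      rwa [hinvhalf (α (τ p)) hατ] at h1
    have hz : ∀ n : ℕ, Tendsto (fun B : ℕ =>
        ∫ u in (((blkI T B (τ p)).toNat : ℝ) * T / B)..((((blkI T B (τ p)).toNat : ℝ) + 1) * T / B), σ u ^ n)
        atTop (nhds 0) := by
      intro n
      refine squeeze_zero' (g := fun B : ℕ => σhi ^ n * (T / (B:ℝ))) ?_ ?_ ?_
      · filter_upwards [eventually_ge_atTop 1] with B hB
        obtain ⟨hiB, _⟩ := hblkp B hB
        obtain ⟨h1, h2, h3, h4⟩ := hblk B ((blkI T B (τ p)).toNat) hB hiB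
        have hint := le_integral_of_le h3 (hIntσ n _ _ h1 h2 h3)
          (fun u hu => by
            have hlo := (hbd u (hblksub B _ hB hiB hu)).1
            exact pow_nonneg (le_trans hσlo.le hlo) n)
        simpa using hint
      · filter_upwards [eventually_ge_atTop 1] with B hB
        obtain ⟨hiB, _⟩ := hblkp B hB
        obtain ⟨h1, h2, h3, h4⟩ := hblk B ((blkI T B (τ p)).toNat) hB hiB
        have hint := integral_le_of_le h3 (hIntσ n _ _ h1 h2 h3)
          (fun u hu => by
            have hu1 := (hbd u (hblksub B _ hB hiB hu)).1
            have hu2 := (hbd u (hblksub B _ hB hiB hu)).2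
            exact pow_le_pow_left₀ (by linarith) hu2 n)
        rw [h4] at hint
        exact hint
      · have h1 := (tendsto_const_div_atTop_nhds_zero_nat T).const_mul (σhi ^ n)
        simpa using h1
    have hQVt : Tendsto (fun B : ℕ => QVjump T σ τ j B ((blkI T B (τ p)).toNat)) atTop
        (nhds (j p ^ 2)) := by
      refine Tendsto.congr' (hsingle.mono fun B hB => hB.2.symm) ?_
      have h1 := (hz 2).add_const (j p ^ 2)
      rwa [zero_add] at h1
    have hQt : Tendsto (fun B : ℕ => Qjump T σ σm τ j B ((blkI T B (τ p)).toNat)) atTop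
        (nhds cp) := by
      refine Tendsto.congr' (hsingle.mono fun B hB => hB.1.symm) ?_
      have h1 := (hz 4).add_const cp
      rwa [zero_add] at h1
    have hρt : Tendsto (fun B : ℕ => QVjump T σ τ j B ((blkI T B (τ p)).toNat) /
        ((T/B) * Qjump T σ σm τ j B ((blkI T B (τ p)).toNat)) ^ ((1:ℝ)/2)) atTop atTop := by
      have hd0 : Tendsto (fun B : ℕ =>
          (T/B) * Qjump T σ σm τ j B ((blkI T B (τ p)).toNat)) atTop (nhds 0) := by
        have h1 := (tendsto_const_div_atTop_nhds_zero_nat T).mul hQt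
        rwa [zero_mul] at h1
      have hd1 : Tendsto (fun B : ℕ =>
          ((T/B) * Qjump T σ σm τ j B ((blkI T B (τ p)).toNat)) ^ ((1:ℝ)/2)) atTop
          (nhds 0) := by
        have h1 := hd0.rpow_const (p := (1:ℝ)/2) (Or.inr (by norm_num))
        rwa [Real.zero_rpow (by norm_num : (1:ℝ)/2 ≠ 0)] at h1
      have hdpos : ∀ᶠ B : ℕ in atTop,
          ((T/B) * Qjump T σ σm τ j B ((blkI T B (τ p)).toNat)) ^ ((1:ℝ)/2) ∈
            Set.Ioi (0:ℝ) := by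
        filter_upwards [eventually_ge_atTop 1] with B hB
        have hB0 : (0:ℝ) < B := by exact_mod_cast hB
        have := hQpos B hB
        have h2 : 0 < (T/B) * Qjump T σ σm τ j B ((blkI T B (τ p)).toNat) := by positivity
        exact Real.rpow_pos_of_pos h2 _
      have hd2 : Tendsto (fun B : ℕ =>
          ((T/B) * Qjump T σ σm τ j B ((blkI T B (τ p)).toNat)) ^ ((1:ℝ)/2)) atTop
          (nhdsWithin 0 (Set.Ioi 0)) :=
        tendsto_nhdsWithin_of_tendsto_nhds_of_eventually_within _ hd1 hdpos
      have hinv := tendsto_inv_nhdsGT_zero.comp hd2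
      have h3 := Filter.Tendsto.pos_mul_atTop hj2 hQVt hinv
      refine h3.congr fun B => ?_
      rw [div_eq_mul_inv]
      rfl
    have hht := hKer_tendsto_atTop (k00 := k00) (k11 := k11) (k22 := k22) |>.comp hρt
    have hQVh := hQVt.rpow_const (p := (1:ℝ)/2) (Or.inr (by norm_num))
    have hQh := hQt.rpow_const (p := (1:ℝ)/2) (Or.inr (by norm_num))
    refine Tendsto.congr' (hev.mono fun B h => h.symm) ?_
    have htot := ((((tendsto_const_nhds
        (x := 16/3 * (k00*k11) ^ ((1:ℝ)/2) * A ^ ((1:ℝ)/2) * a)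
        (f := atTop (α := ℕ))).mul hwt).mul hQVh).mul hQh).mul hht
    have hval : 16/3 * (k00*k11) ^ ((1:ℝ)/2) * A ^ ((1:ℝ)/2) * a *
        (α (τ p)) ^ ((1:ℝ)/2) * (j p ^ 2) ^ ((1:ℝ)/2) * cp ^ ((1:ℝ)/2) *
        ((2:ℝ) ^ (-(1:ℝ)/2) + (2:ℝ) ^ ((1:ℝ)/2)) =
        16/3 * (k00*k11) ^ ((1:ℝ)/2) * A ^ ((1:ℝ)/2) * a *
        ((2:ℝ) ^ (-(1:ℝ)/2) + (2:ℝ) ^ ((1:ℝ)/2)) *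
        (j p ^ 2 * (σ (τ p)^2 * α (τ p) + σm (τ p)^2 * α (τ p)) ^ ((1:ℝ)/2)) := by
      have hjj : (j p ^ 2) ^ ((1:ℝ)/2) * (j p ^ 2) ^ ((1:ℝ)/2) = j p ^ 2 := by
        rw [← Real.rpow_add hj2]
        norm_num
      have hsum0 : (0:ℝ) ≤ σ (τ p)^2 + σm (τ p)^2 := by positivity
      have hcsplit : cp ^ ((1:ℝ)/2) =
          (j p ^ 2) ^ ((1:ℝ)/2) * (σ (τ p)^2 + σm (τ p)^2) ^ ((1:ℝ)/2) := by
        rw [hcpdef, Real.mul_rpow hj2.le hsum0]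
      have hαsplit : (σ (τ p)^2 + σm (τ p)^2) ^ ((1:ℝ)/2) * (α (τ p)) ^ ((1:ℝ)/2) =
          (σ (τ p)^2 * α (τ p) + σm (τ p)^2 * α (τ p)) ^ ((1:ℝ)/2) := by
        rw [← Real.mul_rpow hsum0 hατ.le, add_mul]
      calc 16/3 * (k00*k11) ^ ((1:ℝ)/2) * A ^ ((1:ℝ)/2) * a *
          (α (τ p)) ^ ((1:ℝ)/2) * (j p ^ 2) ^ ((1:ℝ)/2) * cp ^ ((1:ℝ)/2) *
          ((2:ℝ) ^ (-(1:ℝ)/2) + (2:ℝ) ^ ((1:ℝ)/2))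
          = 16/3 * (k00*k11) ^ ((1:ℝ)/2) * A ^ ((1:ℝ)/2) * a *
            ((2:ℝ) ^ (-(1:ℝ)/2) + (2:ℝ) ^ ((1:ℝ)/2)) *
            (((j p ^ 2) ^ ((1:ℝ)/2) * (j p ^ 2) ^ ((1:ℝ)/2)) *
              ((σ (τ p)^2 + σm (τ p)^2) ^ ((1:ℝ)/2) * (α (τ p)) ^ ((1:ℝ)/2))) := by
            rw [hcsplit]; ring
        _ = _ := by rw [hjj, hαsplit]
    rwa [hval] at htot
  -- limit of the jump part of the sum
  have hS2 : Tendsto (fun B : ℕ => ∑ i ∈ Finset.range B,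
      (if noJ T τ B i then 0 else rkTerm T a k00 k11 k22 σ σm α τ j B i)) atTop
      (nhds ((16 / 3) * ((2:ℝ) ^ (-(1:ℝ)/2) + (2:ℝ) ^ ((1:ℝ)/2)) * (k00*k11) ^ ((1:ℝ)/2) * a *
        A ^ ((1:ℝ)/2) * ∑ p : Fin N, j p ^ 2 *
          (σ (τ p)^2 * α (τ p) + σm (τ p)^2 * α (τ p)) ^ ((1:ℝ)/2))) := by
    refine Tendsto.congr' (hS2eq.mono fun B h => h.symm) ?_
    have h1 := tendsto_finset_sum Finset.univ (fun (p : Fin N) (_ : p ∈ Finset.univ) => hjp p)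
    have h2 : (∑ p : Fin N, (16/3 * (k00*k11) ^ ((1:ℝ)/2) * A ^ ((1:ℝ)/2) * a *
        ((2:ℝ) ^ (-(1:ℝ)/2) + (2:ℝ) ^ ((1:ℝ)/2)) *
        (j p ^ 2 * (σ (τ p)^2 * α (τ p) + σm (τ p)^2 * α (τ p)) ^ ((1:ℝ)/2))))
        = (16 / 3) * ((2:ℝ) ^ (-(1:ℝ)/2) + (2:ℝ) ^ ((1:ℝ)/2)) * (k00*k11) ^ ((1:ℝ)/2) * a *
          A ^ ((1:ℝ)/2) * ∑ p : Fin N, j p ^ 2 *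
            (σ (τ p)^2 * α (τ p) + σm (τ p)^2 * α (τ p)) ^ ((1:ℝ)/2) := by
      rw [← Finset.mul_sum]
      ring
    rw [← h2]
    exact h1
  -- splitting the full sum
  have hsplit : ∀ B : ℕ, (∑ i ∈ Finset.range B, rkTerm T a k00 k11 k22 σ σm α τ j B i)
      = (∑ i ∈ Finset.range B,
          (if noJ T τ B i then rkTerm T a k00 k11 k22 σ σm α τ j B i else 0))
        + (∑ i ∈ Finset.range B,
          (if noJ T τ B i then 0 else rkTerm T a k00 k11 k22 σ σm α τ j B i)) := by
    intro B
    rw [← Finset.sum_add_distrib]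
    apply Finset.sum_congr rfl
    intro i _
    by_cases h : noJ T τ B i <;> simp [h]
  show Tendsto (fun B : ℕ => ∑ i ∈ Finset.range B, rkTerm T a k00 k11 k22 σ σm α τ j B i)
    atTop
    (nhds (gKer k00 k11 k22 1 * a * A ^ ((1:ℝ)/2) *
        (∫ s in (0:ℝ)..T, (α s) ^ ((1:ℝ)/2) * σ s ^ 3) +
      (16 / 3) * ((2:ℝ) ^ (-(1:ℝ)/2) + (2:ℝ) ^ ((1:ℝ)/2)) * (k00*k11) ^ ((1:ℝ)/2) * a *
        A ^ ((1:ℝ)/2) * ∑ p : Fin N, j p ^ 2 *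
          (σ (τ p)^2 * α (τ p) + σm (τ p)^2 * α (τ p)) ^ ((1:ℝ)/2)))
  have hfun : (fun B : ℕ => ∑ i ∈ Finset.range B, rkTerm T a k00 k11 k22 σ σm α τ j B i)
      = fun B : ℕ =>
        (∑ i ∈ Finset.range B,
          (if noJ T τ B i then rkTerm T a k00 k11 k22 σ σm α τ j B i else 0))
        + (∑ i ∈ Finset.range B,
          (if noJ T τ B i then 0 else rkTerm T a k00 k11 k22 σ σm α τ j B i)) :=
    funext hsplit
  rw [hfun]
  exact hS1.add hS2
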